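/- arXiv:math/0005194 — 12 statements merged into one kernel-verified Lean document; each statement's English description precedes it below -/
import Mathlib

section
/- Every strictly convex closed set in a real normed space is locally nonconical. -/
open Set Filter Topology

/-- Locally nonconical (LNC). -/
def LNC {X : Type*} [AddCommGroup X] [Module ℝ X] [TopologicalSpace X] (Q : Set X) : Prop :=
  ∀ x ∈ Q, ∀ x' ∈ Q,
    ∃ U, U ⊆ Q ∧ U ∈ nhdsWithin x Q ∧ ∀ u ∈ U, u + (2⁻¹ : ℝ) • (x' - x) ∈ Q

/-- Every strictly convex closed set in a real normed space is locally nonconical.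
Here a closed convex set with nonempty interior is strictly convex if the midpoint of any two
distinct points of the set lies in its interior. -/
theorem strictlyConvex_closed_lnc {X : Type*} [NormedAddCommGroup X] [NormedSpace ℝ X]
    (Q : Set X) (hclosed : IsClosed Q) (hconv : Convex ℝ Q)
    (hint : (interior Q).Nonempty)
    (hsc : ∀ x ∈ Q, ∀ y ∈ Q, x ≠ y → midpoint ℝ x y ∈ interior Q) :
    LNC Q := by
  intro x hx x' hx'
  by_cases hxx : x = x'
  · refine ⟨Q, Subset.rfl, self_mem_nhdsWithin, fun u hu => ?_⟩
    simp [hxx, hu]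
  · set c : X := (2⁻¹ : ℝ) • (x' - x) with hc
    have hmid : midpoint ℝ x x' = x + c := by
      rw [midpoint_eq_smul_add, invOf_eq_inv, hc]; module
    have hm : x + c ∈ interior Q := hmid ▸ hsc x hx x' hx' hxx
    have hcont : Continuous fun u : X => u + c := continuous_add_right c
    refine ⟨Q ∩ (fun u : X => u + c) ⁻¹' interior Q, inter_subset_left, ?_, ?_⟩
    · exact inter_mem_nhdsWithin Q
        ((isOpen_interior.preimage hcont).mem_nhds (by simpa using hm))
    · exact fun u hu => interior_subset hu.2
end

section
/- The Cartesian product of two locally nonconical convex sets is locally nonconical. -/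
open Set Filter Topology

/-- The Cartesian product of two locally nonconical convex sets is locally nonconical. -/
theorem lnc_prod {X Y : Type*} [TopologicalSpace X] [AddCommGroup X] [Module ℝ X]
    [TopologicalSpace Y] [AddCommGroup Y] [Module ℝ Y]
    (Q₁ : Set X) (Q₂ : Set Y) (hQ₁conv : Convex ℝ Q₁) (hQ₂conv : Convex ℝ Q₂)
    (hQ₁ : LNC Q₁) (hQ₂ : LNC Q₂) :
    LNC (Q₁ ×ˢ Q₂) := by
  rintro ⟨x, y⟩ ⟨hx, hy⟩ ⟨x', y'⟩ ⟨hx', hy'⟩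
  obtain ⟨U₁, hU₁sub, hU₁nhds, hU₁⟩ := hQ₁ x hx x' hx'
  obtain ⟨U₂, hU₂sub, hU₂nhds, hU₂⟩ := hQ₂ y hy y' hy'
  refine ⟨U₁ ×ˢ U₂, prod_mono hU₁sub hU₂sub, by rw [nhdsWithin_prod_eq]; exact prod_mem_prod hU₁nhds hU₂nhds, ?_⟩
  rintro ⟨u, v⟩ ⟨hu, hv⟩
  exact ⟨hU₁ u hu, hU₂ v hv⟩
end

section
/- Every convex set in ℝ² is locally nonconical. -/
/-!
Let `m` be the midpoint of `x` and `x'`. If `m` is interior to `Q`, translation by `m - x` is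
continuous. Otherwise either `Q` lies on the line `xx'`, whose points near `m` lie in the segment
`[x, x']`, or `Q` has a supporting line at `m`; it contains `x` and `x'`, so in the plane it is the
line `xx'`. A point `z` near `m` on the side of this line containing an interior point `q` then
lies on a segment from `q` to a point of the line near `m`, hence of `[x, x']`, so `z ∈ Q`.
-/

open Set Filter Topology

theorem lnc_of_forall_eventually {X : Type*} [AddCommGroup X] [Module ℝ X] [TopologicalSpace X]
    {Q : Set X} (h : ∀ x ∈ Q, ∀ x' ∈ Q, ∀ᶠ u in 𝓝[Q] x, u + (2⁻¹ : ℝ) • (x' - x) ∈ Q) :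
    LNC Q := fun x hx x' hx' =>
  ⟨{u ∈ Q | u + (2⁻¹ : ℝ) • (x' - x) ∈ Q}, sep_subset _ _,
    inter_mem self_mem_nhdsWithin (h x hx x' hx'), fun _ hu => hu.2⟩

theorem Submodule.eq_span_singleton_of_ne_top {K E : Type*} [DivisionRing K] [AddCommGroup E]
    [Module K E] [FiniteDimensional K E] (hE : Module.finrank K E ≤ 2) {S : Submodule K E}
    (hS : S ≠ ⊤) {v : E} (hv : v ∈ S) (hv0 : v ≠ 0) : S = K ∙ v :=
  (Submodule.eq_of_le_of_finrank_le ((Submodule.span_singleton_le_iff_mem v S).2 hv) (by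
    rw [finrank_span_singleton hv0]
    have := Submodule.finrank_lt hS
    omega)).symm

theorem eventually_add_mem_of_mem_interior {E : Type*} [AddCommGroup E] [TopologicalSpace E]
    [ContinuousAdd E] {Q : Set E} {x v : E} (h : x + v ∈ interior Q) :
    ∀ᶠ u in 𝓝 x, u + v ∈ Q :=
  (continuous_add_const v).continuousAt.preimage_mem_nhds (mem_interior_iff_mem_nhds.1 h)

section NormedSpace

variable {E : Type*} [NormedAddCommGroup E] [NormedSpace ℝ E]

theorem eventually_mem_segment_of_sub_mem_span {x y : E} (hxy : x ≠ y) :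
    ∀ᶠ s in 𝓝 (x + (2⁻¹ : ℝ) • (y - x)), s - x ∈ ℝ ∙ (y - x) → s ∈ segment ℝ x y := by
  have hpos : 0 < 2⁻¹ * ‖y - x‖ := by
    have := norm_pos_iff.2 (sub_ne_zero.2 hxy.symm)
    positivity
  filter_upwards [Metric.ball_mem_nhds _ hpos] with s hs hspan
  obtain ⟨r, hr⟩ := Submodule.mem_span_singleton.1 hspan
  have hsr : s = x + r • (y - x) := by rw [hr]; abel
  have hdist : |r - 2⁻¹| * ‖y - x‖ < 2⁻¹ * ‖y - x‖ := by
    rw [Metric.mem_ball, dist_eq_norm, hsr,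
      show x + r • (y - x) - (x + (2⁻¹ : ℝ) • (y - x)) = (r - 2⁻¹) • (y - x) by module,
      norm_smul, Real.norm_eq_abs] at hs
    exact hs
  have hr' := abs_lt.1 (lt_of_mul_lt_mul_right hdist (norm_nonneg _))
  rw [segment_eq_image']
  exact ⟨r, ⟨by linarith, by linarith⟩, hsr.symm⟩

theorem Convex.eventually_mem_of_le_of_ker_le {Q : Set E} (hQ : Convex ℝ Q) {x y q : E}
    (hx : x ∈ Q) (hy : y ∈ Q) (hq : q ∈ Q) (hxy : x ≠ y) {f : E →L[ℝ] ℝ} (hfy : f y = f x)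
    (hfq : f q < f x) (hker : LinearMap.ker (f : E →ₗ[ℝ] ℝ) ≤ ℝ ∙ (y - x)) :
    ∀ᶠ z in 𝓝 (x + (2⁻¹ : ℝ) • (y - x)), f z ≤ f x → z ∈ Q := by
  set m := x + (2⁻¹ : ℝ) • (y - x)
  have hfm : f m = f x := by simp [m, hfy]
  set H := f x - f q
  have hH : 0 < H := sub_pos.2 hfq
  set t : E → ℝ := fun z => (f x - f z) / H
  set s : E → E := fun z => (1 - t z)⁻¹ • (z - t z • q)
  have ht : Tendsto t (𝓝 m) (𝓝 0) := by
    simpa [t, hfm] using ((tendsto_const_nhds (x := f x)).sub (f.continuous.tendsto m)).div_const H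
  have hs : Tendsto s (𝓝 m) (𝓝 m) := by
    simpa [s] using (((tendsto_const_nhds (x := (1 : ℝ))).sub ht).inv₀ (by norm_num)).smul
      (tendsto_id.sub (ht.smul (tendsto_const_nhds (x := q))))
  filter_upwards [ht.eventually (gt_mem_nhds one_pos),
    hs.eventually (eventually_mem_segment_of_sub_mem_span hxy)] with z ht1 hseg hz
  have ht0 : 0 ≤ t z := div_nonneg (sub_nonneg.2 hz) hH.le
  have h1t : 1 - t z ≠ 0 := by linarith
  have hdecomp : (1 - t z) • s z + t z • q = z := by
    simp only [s, smul_inv_smul₀ h1t]; abel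
  have hfs : f (s z - x) = 0 := by
    have htH : t z * H = f x - f z := div_mul_cancel₀ _ hH.ne'
    simp only [s, map_sub, map_smul, smul_eq_mul]
    field_simp
    simp only [H] at htH
    linear_combination htH
  rw [← hdecomp]
  exact hQ (hQ.segment_subset hx hy (hseg (hker hfs))) hq (by linarith) ht0 (by ring)

theorem Convex.exists_forall_le_of_notMem_interior {Q : Set E} (hQ : Convex ℝ Q)
    (hint : (interior Q).Nonempty) {m : E} (hm : m ∉ interior Q) :
    ∃ f : E →L[ℝ] ℝ, (∀ u ∈ Q, f u ≤ f m) ∧ ∀ q ∈ interior Q, f q < f m := by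
  obtain ⟨f, hf⟩ := geometric_hahn_banach_open_point hQ.interior isOpen_interior hm
  have hcl : closure (interior Q) ⊆ {a | f a ≤ f m} :=
    closure_minimal (fun a ha => (hf a ha).le) (isClosed_le f.continuous continuous_const)
  refine ⟨f, fun u hu => hcl ?_, hf⟩
  rw [hQ.closure_interior_eq_closure_of_nonempty_interior hint]
  exact subset_closure hu

variable [FiniteDimensional ℝ E] (hE : Module.finrank ℝ E ≤ 2) {Q : Set E} {x y : E}
include hE

theorem Convex.eventually_add_half_sub_mem_of_interior_eq_empty (hQ : Convex ℝ Q)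
    (hint : interior Q = ∅) (hx : x ∈ Q) (hy : y ∈ Q) (hxy : x ≠ y) :
    ∀ᶠ u in 𝓝[Q] x, u + (2⁻¹ : ℝ) • (y - x) ∈ Q := by
  set D := (affineSpan ℝ Q).direction
  have hdir : ∀ {a b}, a ∈ Q → b ∈ Q → a - b ∈ D := fun ha hb =>
    AffineSubspace.vsub_mem_direction (subset_affineSpan ℝ Q ha) (subset_affineSpan ℝ Q hb)
  have hD : D = ℝ ∙ (y - x) := by
    refine Submodule.eq_span_singleton_of_ne_top hE (fun htop => ?_) (hdir hy hx)
      (sub_ne_zero.2 hxy.symm)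
    rw [AffineSubspace.direction_eq_top_iff_of_nonempty ⟨x, subset_affineSpan ℝ Q hx⟩,
      ← hQ.interior_nonempty_iff_affineSpan_eq_top, hint] at htop
    exact not_nonempty_empty htop
  have hlim : Tendsto (· + (2⁻¹ : ℝ) • (y - x)) (𝓝[Q] x) (𝓝 (x + (2⁻¹ : ℝ) • (y - x))) :=
    ((continuous_add_const _).tendsto x).mono_left nhdsWithin_le_nhds
  filter_upwards [self_mem_nhdsWithin,
    hlim.eventually (eventually_mem_segment_of_sub_mem_span hxy)] with u hu hseg
  refine hQ.segment_subset hx hy (hseg ?_)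
  rw [← hD, add_sub_right_comm]
  exact D.add_mem (hdir hu hx) (D.smul_mem _ (hdir hy hx))

theorem Convex.eventually_add_half_sub_mem_of_notMem_interior (hQ : Convex ℝ Q)
    (hint : (interior Q).Nonempty) (hm : x + (2⁻¹ : ℝ) • (y - x) ∉ interior Q) (hx : x ∈ Q)
    (hy : y ∈ Q) (hxy : x ≠ y) :
    ∀ᶠ u in 𝓝[Q] x, u + (2⁻¹ : ℝ) • (y - x) ∈ Q := by
  obtain ⟨f, hfQ, hfint⟩ := hQ.exists_forall_le_of_notMem_interior hint hm
  obtain ⟨q, hq⟩ := hint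
  have hfm : f (x + (2⁻¹ : ℝ) • (y - x)) = 2⁻¹ * (f x + f y) := by simp; ring
  have hfx : f (x + (2⁻¹ : ℝ) • (y - x)) = f x := by linarith [hfQ x hx, hfQ y hy]
  have hfy : f y = f x := by linarith [hfQ x hx, hfQ y hy]
  have hker : LinearMap.ker (f : E →ₗ[ℝ] ℝ) = ℝ ∙ (y - x) := by
    refine Submodule.eq_span_singleton_of_ne_top hE (fun htop => ?_) (by simp [hfy])
      (sub_ne_zero.2 hxy.symm)
    have hf0 : f = 0 := ContinuousLinearMap.coe_injective (LinearMap.ker_eq_top.1 htop)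
    simpa [hf0] using hfint q hq
  have hlim : Tendsto (· + (2⁻¹ : ℝ) • (y - x)) (𝓝[Q] x) (𝓝 (x + (2⁻¹ : ℝ) • (y - x))) :=
    ((continuous_add_const _).tendsto x).mono_left nhdsWithin_le_nhds
  filter_upwards [self_mem_nhdsWithin, hlim.eventually (hQ.eventually_mem_of_le_of_ker_le hx hy
    (interior_subset hq) hxy hfy (hfx ▸ hfint q hq) hker.le)] with u hu hmem
  have hfu : f (u + (2⁻¹ : ℝ) • (y - x)) = f u := by simp [hfy]
  exact hmem (by linarith [hfQ u hu])

theorem Convex.eventually_add_half_sub_mem (hQ : Convex ℝ Q) (hx : x ∈ Q) (hy : y ∈ Q) :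
    ∀ᶠ u in 𝓝[Q] x, u + (2⁻¹ : ℝ) • (y - x) ∈ Q := by
  obtain rfl | hxy := eq_or_ne x y
  · filter_upwards [self_mem_nhdsWithin] with u hu
    simpa using hu
  by_cases hm : x + (2⁻¹ : ℝ) • (y - x) ∈ interior Q
  · exact nhdsWithin_le_nhds (eventually_add_mem_of_mem_interior hm)
  rcases (interior Q).eq_empty_or_nonempty with hint | hint
  · exact hQ.eventually_add_half_sub_mem_of_interior_eq_empty hE hint hx hy hxy
  · exact hQ.eventually_add_half_sub_mem_of_notMem_interior hE hint hm hx hy hxy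

end NormedSpace

/-- Every convex set in `ℝ²` is locally nonconical. -/
theorem convex_R2_lnc (Q : Set (ℝ × ℝ)) (hconv : Convex ℝ Q) : LNC Q :=
  lnc_of_forall_eventually fun _ hx _ hy => hconv.eventually_add_half_sub_mem (by simp) hx hy
end

section
/- If Q is a compact convex LNC subset of ℝⁿ and T : ℝⁿ → ℝᵐ is a linear map, then the restriction of T to Q is an open map from Q onto T(Q) (with the subspace topologies). -/
open Set Filter Topology Metric

private theorem key_lemma {n m : ℕ}
    (Q : Set (EuclideanSpace ℝ (Fin n)))
    (hcomp : IsCompact Q) (hconv : Convex ℝ Q)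
    (hlnc : ∀ x ∈ Q, ∀ x' ∈ Q,
      ∃ U, U ⊆ Q ∧ U ∈ nhdsWithin x Q ∧ ∀ u ∈ U, u + (2⁻¹ : ℝ) • (x' - x) ∈ Q)
    (T : EuclideanSpace ℝ (Fin n) →ₗ[ℝ] EuclideanSpace ℝ (Fin m))
    (U : Set (EuclideanSpace ℝ (Fin n))) (hU : IsOpen U)
    (x : EuclideanSpace ℝ (Fin n)) (hxU : x ∈ U) (hxQ : x ∈ Q) :
    ∃ ε > 0, ball (T x) ε ∩ ⇑T '' Q ⊆ ⇑T '' (U ∩ Q) := by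
  by_contra hcon
  push_neg at hcon
  have hTc : Continuous T := T.continuous_of_finiteDimensional
  -- build a sequence
  have hseq : ∀ k : ℕ, ∃ w ∈ Q, T w ∈ ball (T x) (1 / (k + 1)) ∧ T w ∉ ⇑T '' (U ∩ Q) := by
    intro k
    obtain ⟨y, hy, hyn⟩ := Set.not_subset.1 (hcon (1 / (k + 1)) (by positivity))
    obtain ⟨w, hwQ, hwy⟩ := hy.2
    exact ⟨w, hwQ, hwy ▸ hy.1, hwy ▸ hyn⟩
  choose xs hxsQ hxsb hxsn using hseq
  -- T xs → T x
  have hTxs : Tendsto (fun k => T (xs k)) atTop (𝓝 (T x)) := by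
    rw [tendsto_iff_dist_tendsto_zero]
    have h1 : Tendsto (fun k : ℕ => 1 / ((k : ℝ) + 1)) atTop (𝓝 0) :=
      tendsto_one_div_add_atTop_nhds_zero_nat
    refine squeeze_zero (fun k => dist_nonneg) (fun k => ?_) h1
    exact le_of_lt (by simpa [dist_comm] using hxsb k)
  obtain ⟨z, hzQ, φ, hφ, hwz⟩ := hcomp.tendsto_subseq hxsQ
  set w : ℕ → EuclideanSpace ℝ (Fin n) := fun k => xs (φ k) with hw
  have hTw : Tendsto (fun k => T (w k)) atTop (𝓝 (T x)) :=
    hTxs.comp hφ.tendsto_atTop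
  have hTz : T z = T x := tendsto_nhds_unique ((hTc.tendsto z).comp hwz) hTw
  -- the points z i
  set zs : ℕ → EuclideanSpace ℝ (Fin n) := fun i => x + ((2:ℝ)⁻¹)^i • (z - x) with hzs
  have hzsQ : ∀ i, zs i ∈ Q := by
    intro i
    have h1 : ((2:ℝ)⁻¹)^i ≤ 1 := pow_le_one₀ (by norm_num) (by norm_num)
    have h0 : (0:ℝ) ≤ ((2:ℝ)⁻¹)^i := by positivity
    have := hconv hxQ hzQ (sub_nonneg.2 h1) h0 (by ring)
    convert this using 1
    simp [hzs]
    module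
  have hTzs : ∀ i, T (zs i) = T x := by
    intro i
    simp [hzs, map_add, map_smul, map_sub, hTz]
  have hstep : ∀ i, zs i + (2⁻¹ : ℝ) • (x - zs i) = zs (i + 1) := by
    intro i
    simp only [hzs, pow_succ]
    module
  -- main induction
  have hmain : ∀ i, ∀ᶠ k in atTop, w k - z + zs i ∈ Q := by
    intro i
    induction i with
    | zero =>
      filter_upwards with k
      have : w k - z + zs 0 = w k := by simp [hzs]
      rw [this]; exact hxsQ (φ k)
    | succ i ih =>
      obtain ⟨Ui, hUiQ, hUin, hUis⟩ := hlnc (zs i) (hzsQ i) x hxQ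
      have htend : Tendsto (fun k => w k - z + zs i) atTop (𝓝[Q] (zs i)) := by
        rw [tendsto_nhdsWithin_iff]
        constructor
        · have : Tendsto (fun k => w k - z + zs i) atTop (𝓝 (z - z + zs i)) :=
            ((hwz.sub_const z).add_const (zs i))
          simpa using this
        · exact ih
      have hev : ∀ᶠ k in atTop, w k - z + zs i ∈ Ui := htend.eventually_mem hUin
      filter_upwards [hev] with k hk
      have := hUis _ hk
      have heq : w k - z + zs i + (2⁻¹:ℝ) • (x - zs i) = w k - z + zs (i + 1) := by
        rw [← hstep i]; module
      rwa [heq] at this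
  -- choose ε and j
  obtain ⟨ε, hε, hball⟩ := Metric.isOpen_iff.1 hU x hxU
  obtain ⟨j, hj⟩ : ∃ j : ℕ, ((2:ℝ)⁻¹)^j * (‖z - x‖ + 1) < ε / 2 := by
    have h1 : Tendsto (fun j : ℕ => ((2:ℝ)⁻¹)^j * (‖z - x‖ + 1)) atTop (𝓝 0) := by
      have h0 : Tendsto (fun j : ℕ => ((2:ℝ)⁻¹)^j) atTop (𝓝 0) :=
        tendsto_pow_atTop_nhds_zero_of_lt_one (by norm_num) (by norm_num)
      simpa using h0.mul_const (‖z - x‖ + 1)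
    have := h1.eventually (eventually_lt_nhds (by positivity : (0:ℝ) < ε / 2))
    exact this.exists
  have hev2 : ∀ᶠ k in atTop, ‖w k - z‖ < ε / 2 := by
    have : Tendsto (fun k => ‖w k - z‖) atTop (𝓝 0) := by
      simpa using (tendsto_iff_norm_sub_tendsto_zero.1 hwz)
    exact this.eventually (eventually_lt_nhds (by positivity))
  obtain ⟨k, hkQ, hkn⟩ := ((hmain j).and hev2).exists
  -- the point
  set p := w k - z + zs j with hp
  have hpU : p ∈ U := by
    apply hball
    have h1 : ‖p - x‖ < ε := by
      have : p - x = (w k - z) + ((2:ℝ)⁻¹)^j • (z - x) := by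
        simp only [hp, hzs]; module
      rw [this]
      calc ‖(w k - z) + ((2:ℝ)⁻¹)^j • (z - x)‖
          ≤ ‖w k - z‖ + ‖((2:ℝ)⁻¹)^j • (z - x)‖ := norm_add_le _ _
        _ < ε / 2 + ε / 2 := by
            apply add_lt_add hkn
            rw [norm_smul]
            calc ‖((2:ℝ)⁻¹)^j‖ * ‖z - x‖ ≤ ((2:ℝ)⁻¹)^j * (‖z - x‖ + 1) := by
                  rw [Real.norm_eq_abs, abs_of_nonneg (by positivity)]
                  nlinarith [norm_nonneg (z - x), pow_pos (by norm_num : (0:ℝ) < 2⁻¹) j]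
              _ < ε / 2 := hj
        _ = ε := by ring
    simpa [mem_ball, dist_eq_norm] using h1
  have hTp : T p = T (w k) := by
    simp only [hp, map_add, map_sub, hTzs j, hTz]
    abel
  exact hxsn (φ k) ⟨p, ⟨hpU, hkQ⟩, hTp⟩


/-- If `Q ⊆ ℝⁿ` is compact, convex and LNC and `T : ℝⁿ → ℝᵐ` is linear, then the restriction
of `T` to `Q` is an open map onto `T(Q)`: the image of any relatively open subset of `Q` is
relatively open in `T(Q)`. -/
theorem lnc_restriction_open {n m : ℕ}
    (Q : Set (EuclideanSpace ℝ (Fin n)))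
    (hcomp : IsCompact Q) (hconv : Convex ℝ Q) (hlnc : LNC Q)
    (T : EuclideanSpace ℝ (Fin n) →ₗ[ℝ] EuclideanSpace ℝ (Fin m)) :
    ∀ U : Set (EuclideanSpace ℝ (Fin n)), IsOpen U →
      ∃ V : Set (EuclideanSpace ℝ (Fin m)), IsOpen V ∧ ⇑T '' (U ∩ Q) = V ∩ ⇑T '' Q := by
  intro U hU
  have key : ∀ x ∈ U ∩ Q, ∃ ε > 0, ball (T x) ε ∩ ⇑T '' Q ⊆ ⇑T '' (U ∩ Q) :=
    fun x hx => key_lemma Q hcomp hconv hlnc T U hU x hx.1 hx.2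
  choose! ε hεpos hsub using key
  refine ⟨⋃ x ∈ U ∩ Q, ball (T x) (ε x), isOpen_biUnion fun _ _ => isOpen_ball, ?_⟩
  ext y
  constructor
  · rintro ⟨w, hw, rfl⟩
    exact ⟨mem_biUnion hw (mem_ball_self (hεpos _ hw)), ⟨w, hw.2, rfl⟩⟩
  · rintro ⟨hyV, hyT⟩
    obtain ⟨x, hx, hb⟩ := mem_iUnion₂.1 hyV
    exact hsub x hx ⟨hb, hyT⟩
end

section
/- If Q is a compact convex subset of ℝⁿ such that for every linear map T : ℝⁿ → ℝ^(n-1) the restriction T|_Q : Q → T(Q) is an open map, then Q is LNC. -/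
open Set Filter Topology

open Submodule Metric in
set_option maxHeartbeats 1000000 in
/-- If `Q ⊆ ℝⁿ` is compact and convex and for every linear map `T : ℝⁿ → ℝ^(n-1)` the
restriction `T|_Q : Q → T(Q)` is open (images of relatively open subsets of `Q` are relatively
open in `T(Q)`), then `Q` is LNC. -/
theorem open_restrictions_imply_lnc {n : ℕ}
    (Q : Set (EuclideanSpace ℝ (Fin n)))
    (hcomp : IsCompact Q) (hconv : Convex ℝ Q)
    (hopen : ∀ T : EuclideanSpace ℝ (Fin n) →ₗ[ℝ] EuclideanSpace ℝ (Fin (n - 1)),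
      ∀ U : Set (EuclideanSpace ℝ (Fin n)), IsOpen U →
        ∃ V : Set (EuclideanSpace ℝ (Fin (n - 1))), IsOpen V ∧ ⇑T '' (U ∩ Q) = V ∩ ⇑T '' Q) :
    LNC Q := by
  intro x hx x' hx'
  set d := x' - x with hdd
  by_cases hd0 : d = 0
  · exact ⟨Q, le_refl _, self_mem_nhdsWithin, fun u hu => by simpa [hd0] using hu⟩
  have hdpos : (0:ℝ) < ‖d‖ := norm_pos_iff.2 hd0
  -- build T with kernel ℝ ∙ d
  have h2 : Module.finrank ℝ ((ℝ ∙ d)ᗮ : Submodule ℝ _) = n - 1 := by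
    have := Submodule.finrank_add_finrank_orthogonal (K := ℝ ∙ d)
    simp only [finrank_span_singleton hd0, finrank_euclideanSpace_fin] at this
    omega
  set K := (ℝ ∙ d)ᗮ with hK
  have e : (K : Submodule ℝ _) ≃ₗ[ℝ] EuclideanSpace ℝ (Fin (n-1)) := by
    apply LinearEquiv.ofFinrankEq
    simp [h2, finrank_euclideanSpace_fin]
  set T : EuclideanSpace ℝ (Fin n) →ₗ[ℝ] EuclideanSpace ℝ (Fin (n-1)) :=
    e.toLinearMap ∘ₗ (orthogonalProjection K).toLinearMap with hT
  have hker : ∀ v, T v = 0 → v ∈ ℝ ∙ d := by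
    intro v hv
    have h0 : orthogonalProjection K v = 0 := by
      have := hv
      simp only [hT, LinearMap.comp_apply, ContinuousLinearMap.coe_coe,
        LinearEquiv.coe_coe] at this
      exact (LinearEquiv.map_eq_zero_iff e).1 this
    have : v ∈ Kᗮ := (Submodule.orthogonalProjectionOnto_eq_zero_iff).1 h0
    rwa [hK, Submodule.orthogonal_orthogonal] at this
  have hTd : T d = 0 := by
    have hdK : d ∈ Kᗮ := by
      rw [hK, Submodule.orthogonal_orthogonal]; exact mem_span_singleton_self d
    simp [hT, Submodule.orthogonalProjectionOnto_apply_of_mem_orthogonal hdK]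
  have hxd : x + d ∈ Q := by simpa [hdd] using hx'
  obtain ⟨V, hVopen, hVeq⟩ := hopen T (ball (x + d) (‖d‖/4)) isOpen_ball
  have hTxV : T x ∈ V := by
    have h1 : T (x + d) ∈ ⇑T '' (ball (x + d) (‖d‖/4) ∩ Q) :=
      ⟨x + d, ⟨mem_ball_self (by positivity), hxd⟩, rfl⟩
    rw [hVeq] at h1
    have : T (x + d) = T x := by rw [map_add, hTd, add_zero]
    rw [this] at h1
    exact h1.1
  obtain ⟨δ, hδpos, hδ⟩ := Metric.isOpen_iff.1 hVopen _ hTxV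
  have hTcont : Continuous T := T.continuous_of_finiteDimensional
  -- neighborhood where Tu lands in ball (T x) δ
  obtain ⟨δ', hδ'pos, hδ'⟩ := Metric.continuous_iff.1 hTcont x δ hδpos
  set r := min δ' (‖d‖/4) with hr
  have hrpos : 0 < r := lt_min hδ'pos (by positivity)
  refine ⟨Q ∩ ball x r, inter_subset_left, ?_, ?_⟩
  · exact inter_mem_nhdsWithin Q (ball_mem_nhds x hrpos)
  · rintro u ⟨huQ, huball⟩
    have hTu : T u ∈ V := hδ (hδ' u (lt_of_lt_of_le huball (min_le_left _ _)))
    have : T u ∈ ⇑T '' (ball (x + d) (‖d‖/4) ∩ Q) := by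
      rw [hVeq]; exact ⟨hTu, ⟨u, huQ, rfl⟩⟩
    obtain ⟨p, ⟨hpball, hpQ⟩, hpT⟩ := this
    have hpu : p - u ∈ ℝ ∙ d := hker _ (by rw [map_sub, hpT, sub_self])
    obtain ⟨s, hs⟩ := mem_span_singleton.1 hpu
    -- estimate s close to 1
    have hest : ‖s • d - d‖ < ‖d‖/2 := by
      have h1 : s • d - d = (p - (x + d)) - (u - x) := by
        rw [hs]; abel
      rw [h1]
      have h2 : ‖p - (x + d)‖ < ‖d‖/4 := mem_ball_iff_norm.1 hpball
      have h3 : ‖u - x‖ < ‖d‖/4 := by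
        have := mem_ball_iff_norm.1 huball
        exact lt_of_lt_of_le this (min_le_right _ _)
      calc ‖(p - (x + d)) - (u - x)‖ ≤ ‖p - (x + d)‖ + ‖u - x‖ := norm_sub_le _ _
        _ < ‖d‖/4 + ‖d‖/4 := by linarith
        _ = ‖d‖/2 := by ring
    have hs1 : |s - 1| < 1/2 := by
      have : ‖s • d - d‖ = |s - 1| * ‖d‖ := by
        rw [show s • d - d = (s - 1) • d by rw [sub_smul, one_smul], norm_smul,
          Real.norm_eq_abs]
      rw [this] at hest
      nlinarith [abs_nonneg (s - 1)]
    have hs2 : (1:ℝ)/2 < s := by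
      have := abs_lt.1 hs1; linarith [this.1]
    -- u + (1/2) d = (1-t) u + t p with t = 1/(2s)
    set t : ℝ := 1 / (2 * s) with ht
    have hspos : 0 < s := by linarith
    have ht0 : 0 ≤ t := by positivity
    have ht1 : t ≤ 1 := by
      rw [ht, div_le_one (by linarith)]; linarith
    have hcomb := hconv huQ hpQ (by linarith : (0:ℝ) ≤ 1 - t) ht0 (by ring)
    have heq : (1 - t) • u + t • p = u + (2⁻¹ : ℝ) • d := by
      have : p = u + s • d := by rw [hs]; abel
      rw [this, smul_add, sub_smul, one_smul, smul_smul]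
      have : t * s = 2⁻¹ := by
        rw [ht]; field_simp
      rw [this]; abel
    rwa [heq] at hcomb
end

section
/- Let Q be a compact LNC subset of ℝⁿ, T : ℝⁿ → ℝᵐ linear, and fix a strictly convex norm on ℝⁿ. For each y ∈ T(Q), there is a unique element g(y) of T⁻¹(y) ∩ Q of minimal norm, and the map g : T(Q) → Q so defined is continuous and satisfies T(g(y)) = y for all y ∈ T(Q). -/
open Set Filter Topology

/-!
Minimizers of a strictly convex norm on the convex fibres `Q ∩ T⁻¹(y)` are unique, so by
compactness of `Q` the minimizer map `g` is continuous as soon as `y ↦ min ν` is upper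
semicontinuous on `T(Q)`. That follows from the LNC property: fix `x ∈ Q` and, for `y` near `T x`,
let `q y` be a point of the fibre over `y` nearest to `x`. A limit point `z` of `q y` as `y → T x`
lies in the fibre of `x`, and LNC at `z` allows points of `Q` near `z` to be moved by `(x - z)/2`
within their fibre, so by minimality `dist z x ≤ dist z x / 2`, i.e. `z = x`. Hence `q y → x`,
and for `x = g y₀` this gives `ν (g y) ≤ ν (q y) → ν (g y₀)` as `y → y₀`.
-/

theorem Seminorm.continuous_of_finiteDimensional {E : Type*} [NormedAddCommGroup E]
    [NormedSpace ℝ E] [FiniteDimensional ℝ E] (p : Seminorm ℝ E) : Continuous p :=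
  continuousOn_univ.1 (p.convexOn.continuousOn isOpen_univ)

theorem Seminorm.half_smul_add_lt {E : Type*} [AddCommGroup E] [Module ℝ E] (p : Seminorm ℝ E)
    (hp0 : ∀ v, p v = 0 → v = 0)
    (hsc : ∀ v w, p v = 1 → p w = 1 → v ≠ w → p ((2⁻¹ : ℝ) • (v + w)) < 1)
    {v w : E} (h : p v = p w) (hne : v ≠ w) : p ((2⁻¹ : ℝ) • (v + w)) < p v := by
  have hpos : 0 < p v := (apply_nonneg p v).lt_of_ne fun h0 =>
    hne ((hp0 v h0.symm).trans (hp0 w (h ▸ h0.symm)).symm)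
  have hunit : ∀ u, p u = p v → p ((p v)⁻¹ • u) = 1 := fun u hu => by
    rw [map_smul_eq_mul, Real.norm_of_nonneg (inv_nonneg.2 hpos.le), hu, inv_mul_cancel₀ hpos.ne']
  have hlt := hsc _ _ (hunit v rfl) (hunit w h.symm) ((smul_right_injective E
    (inv_ne_zero hpos.ne')).ne hne)
  rwa [← smul_add, smul_comm, map_smul_eq_mul, Real.norm_of_nonneg (inv_nonneg.2 hpos.le),
    inv_mul_lt_iff₀ hpos, mul_one] at hlt

theorem eq_of_isMinOn_of_half_smul_add_lt {E : Type*} [AddCommGroup E] [Module ℝ E]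
    {f : E → ℝ} (hf : ∀ v w, f v = f w → v ≠ w → f ((2⁻¹ : ℝ) • (v + w)) < f v)
    {S : Set E} (hS : Convex ℝ S) {x z : E} (hx : x ∈ S) (hmin : IsMinOn f S x) (hz : z ∈ S)
    (hle : f z ≤ f x) : z = x := by
  by_contra hne
  have heq : f z = f x := le_antisymm hle (hmin hz)
  have hmid : (2⁻¹ : ℝ) • (z + x) ∈ S := by
    simpa only [smul_add] using hS hz hx (by norm_num) (by norm_num) (by norm_num)
  exact (hf z x heq hne).not_ge (heq ▸ hmin hmid)

theorem IsCompact.exists_isMinOn_inter_preimage {E F : Type*} [TopologicalSpace E]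
    [TopologicalSpace F] [T1Space F] {Q : Set E} (hQ : IsCompact Q) {T : E → F}
    (hT : Continuous T) {f : E → ℝ} (hf : Continuous f) {y : F} (hy : y ∈ T '' Q) :
    ∃ x ∈ Q ∩ T ⁻¹' {y}, IsMinOn f (Q ∩ T ⁻¹' {y}) x := by
  obtain ⟨u, hu, hTu⟩ := hy
  exact (hQ.inter_right (isClosed_singleton.preimage hT)).exists_isMinOn ⟨u, hu, hTu⟩
    hf.continuousOn

theorem MapClusterPt.apply_eq_of_rightInvOn {E F : Type*} [TopologicalSpace E]
    [TopologicalSpace F] [T2Space F] {T : E → F} (hT : Continuous T) {s : Set F} {q : F → E}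
    (hq : RightInvOn q T s) {y : F} {z : E} (hz : MapClusterPt z (𝓝[s] y) q) : T z = y := by
  have hTq : T ∘ q =ᶠ[𝓝[s] y] id := eventually_nhdsWithin_of_forall hq
  have hclus : ClusterPt (T z) (𝓝[s] y) :=
    mapClusterPt_id_iff.1 ((hz.continuousAt_comp hT.continuousAt).congrFun hTq)
  exact eq_of_nhds_neBot (hclus.mono nhdsWithin_le_nhds)

section LNC

variable {E F : Type*} [NormedAddCommGroup E] [NormedSpace ℝ E] {Q : Set E}

theorem LNC.eq_of_mem_closure_fiberwise_nearest [AddCommGroup F] [Module ℝ F] (hlnc : LNC Q)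
    (T : E →ₗ[ℝ] F) {x z : E} (hx : x ∈ Q) (hz : z ∈ Q) (hTz : T z = T x)
    (hzN : z ∈ closure {u ∈ Q | IsMinOn (dist · x) (Q ∩ T ⁻¹' {T u}) u}) : z = x := by
  obtain ⟨U, -, hU, hUQ⟩ := hlnc z hz x hx
  obtain ⟨V, hVo, hzV, hVU⟩ := mem_nhdsWithin.1 hU
  set w := (2⁻¹ : ℝ) • (x - z)
  have hclosed : IsClosed ({u | dist u x ≤ dist (u + w) x} ∪ Vᶜ) :=
    (isClosed_le (continuous_id.dist continuous_const)
      ((continuous_id.add continuous_const).dist continuous_const)).union hVo.isClosed_compl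
  have hsub : {u ∈ Q | IsMinOn (dist · x) (Q ∩ T ⁻¹' {T u}) u} ⊆
      {u | dist u x ≤ dist (u + w) x} ∪ Vᶜ := by
    rintro u ⟨huQ, hmin⟩
    by_cases huV : u ∈ V
    · refine Or.inl (hmin ⟨hUQ u (hVU ⟨huV, huQ⟩), ?_⟩)
      simp [w, hTz]
    · exact Or.inr huV
  rcases closure_minimal hsub hclosed hzN with hle | hzV'
  · have hhalf : dist (z + w) x = 2⁻¹ * dist z x := by
      rw [dist_eq_norm, dist_eq_norm, show z + w - x = (2⁻¹ : ℝ) • (z - x) by module, norm_smul,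
        Real.norm_of_nonneg (by norm_num)]
    exact dist_le_zero.1 (by linarith [dist_nonneg (x := z) (y := x), hle.out])
  · exact absurd hzV hzV'

variable [TopologicalSpace F] [AddCommGroup F] [Module ℝ F] [T2Space F]

theorem LNC.exists_tendsto_section (hQ : IsCompact Q) (hlnc : LNC Q) (T : E →L[ℝ] F) {x : E}
    (hx : x ∈ Q) : ∃ p : F → E, (∀ y ∈ T '' Q, p y ∈ Q ∩ T ⁻¹' {y}) ∧
      Tendsto p (𝓝[T '' Q] (T x)) (𝓝 x) := by
  choose! q hqmem hqmin using fun y (hy : y ∈ T '' Q) =>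
    hQ.exists_isMinOn_inter_preimage T.continuous (continuous_id.dist continuous_const) hy
  refine ⟨q, hqmem, ?_⟩
  have hev : ∀ᶠ y in 𝓝[T '' Q] (T x), y ∈ T '' Q := self_mem_nhdsWithin
  refine hQ.tendsto_nhds_of_unique_mapClusterPt (hev.mono fun y hy => (hqmem y hy).1)
    fun z hz hclus => hlnc.eq_of_mem_closure_fiberwise_nearest T.toLinearMap hx hz
      (hclus.apply_eq_of_rightInvOn T.continuous fun y hy => (hqmem y hy).2) ?_
  refine isClosed_closure.mem_of_mapClusterPt hclus (hev.mono fun y hy => subset_closure ?_)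
  refine ⟨(hqmem y hy).1, ?_⟩
  rw [show T.toLinearMap (q y) = y from (hqmem y hy).2]
  exact hqmin y hy

theorem LNC.continuousOn_of_isMinOn_fiber (hQ : IsCompact Q) (hlnc : LNC Q) (T : E →L[ℝ] F)
    {f : E → ℝ} (hf : Continuous f) {g : F → E}
    (hg : ∀ y ∈ T '' Q, g y ∈ Q ∩ T ⁻¹' {y} ∧ IsMinOn f (Q ∩ T ⁻¹' {y}) (g y))
    (huniq : ∀ y ∈ T '' Q, ∀ z ∈ Q ∩ T ⁻¹' {y}, f z ≤ f (g y) → z = g y) :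
    ContinuousOn g (T '' Q) := by
  intro y hy
  have hev : ∀ᶠ y' in 𝓝[T '' Q] y, y' ∈ T '' Q := self_mem_nhdsWithin
  refine hQ.tendsto_nhds_of_unique_mapClusterPt (hev.mono fun y' hy' => (hg y' hy').1.1)
    fun z hz hclus => huniq y hy z
      ⟨hz, hclus.apply_eq_of_rightInvOn T.continuous fun y' hy' => (hg y' hy').1.2⟩ ?_
  obtain ⟨p, hp, hpt⟩ := hlnc.exists_tendsto_section hQ T (hg y hy).1.1
  rw [show T (g y) = y from (hg y hy).1.2] at hpt
  refine le_of_forall_gt_imp_ge_of_dense fun c hc => ?_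
  have hpc : ∀ᶠ y' in 𝓝[T '' Q] y, f (p y') < c := ((hf.tendsto _).comp hpt).eventually_lt_const hc
  refine (isClosed_le hf continuous_const).mem_of_mapClusterPt hclus ?_
  filter_upwards [hev, hpc] with y' hy' hpc'
  exact ((hg y' hy').2 (hp y' hy')).trans hpc'.le

end LNC

/-- Let `Q ⊆ ℝⁿ` be compact, convex and LNC, `T : ℝⁿ → ℝᵐ` linear, and `ν` a strictly convex
norm on `ℝⁿ`. For each `y ∈ T(Q)` there is a unique element `g y` of `T⁻¹(y) ∩ Q` of minimal
`ν`-norm, and the map `g` so defined is a continuous section of `T|_Q`. -/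
theorem lnc_min_norm_section {n m : ℕ}
    (Q : Set (EuclideanSpace ℝ (Fin n)))
    (hcomp : IsCompact Q) (hconv : Convex ℝ Q) (hlnc : LNC Q)
    (T : EuclideanSpace ℝ (Fin n) →ₗ[ℝ] EuclideanSpace ℝ (Fin m))
    (ν : EuclideanSpace ℝ (Fin n) → ℝ)
    (hν0 : ∀ v, ν v = 0 → v = 0)
    (hνhom : ∀ (a : ℝ) v, ν (a • v) = |a| * ν v)
    (hνtri : ∀ v w, ν (v + w) ≤ ν v + ν w)
    (hνsc : ∀ v w, ν v = 1 → ν w = 1 → v ≠ w → ν ((2⁻¹ : ℝ) • (v + w)) < 1) :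
    ∃ g : EuclideanSpace ℝ (Fin m) → EuclideanSpace ℝ (Fin n),
      ContinuousOn g (⇑T '' Q) ∧
      ∀ y ∈ ⇑T '' Q, g y ∈ Q ∧ T (g y) = y ∧
        (∀ z ∈ Q, T z = y → ν (g y) ≤ ν z) ∧
        (∀ z ∈ Q, T z = y → ν z ≤ ν (g y) → z = g y) := by
  let p : Seminorm ℝ (EuclideanSpace ℝ (Fin n)) := Seminorm.of ν hνtri hνhom
  let T' := LinearMap.toContinuousLinearMap T
  choose! g hgmem hgmin using fun y (hy : y ∈ T' '' Q) =>
    hcomp.exists_isMinOn_inter_preimage T'.continuous p.continuous_of_finiteDimensional hy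
  have huniq : ∀ y ∈ T '' Q, ∀ z ∈ Q ∩ T ⁻¹' {y}, ν z ≤ ν (g y) → z = g y :=
    fun y hy z hz hle => eq_of_isMinOn_of_half_smul_add_lt (fun _ _ => p.half_smul_add_lt hν0 hνsc)
      (hconv.inter ((convex_singleton y).linear_preimage T)) (hgmem y hy) (hgmin y hy) hz hle
  refine ⟨g, hlnc.continuousOn_of_isMinOn_fiber hcomp T' p.continuous_of_finiteDimensional
    (fun y hy => ⟨hgmem y hy, hgmin y hy⟩) huniq, fun y hy => ⟨(hgmem y hy).1, (hgmem y hy).2,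
      fun z hz hTz => hgmin y hy ⟨hz, hTz⟩, fun z hz hTz => huniq y hy z ⟨hz, hTz⟩⟩⟩
end

section
/- Let Q be a compact strictly convex subset of ℝⁿ and T : ℝⁿ → ℝᵐ a linear map. The map g : T(Q) → Q sending y to the unique element of T⁻¹(y) ∩ Q of minimal Euclidean norm is a well-defined continuous section of T|_Q. -/
/-!
On the fibre `Q ∩ T⁻¹{y}`, which is compact and convex, the Euclidean norm has a unique minimiser
by strict convexity of the norm. For continuity at `y`, let `z` be a cluster point of the section
along `y' → y`. Then `z` lies in the fibre over `y`, and `‖z‖ ≤ ‖w‖` for every `w` in that fibre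
that is interior to `Q`: a continuous right inverse of `T` on its range moves `w` to points of
the nearby fibres, and these stay in `Q`. If `z` differed from the minimiser `x`, the midpoint of
`x` and `z` would be such a `w`, so `‖z‖ ≤ (‖x‖ + ‖z‖) / 2`, i.e. `‖z‖ ≤ ‖x‖`, and uniqueness
gives `z = x`. Compactness of `Q` turns this uniqueness of cluster points into convergence.
-/

open Set Filter Topology

theorem LinearMap.exists_rightInvOn_range {K V W : Type*} [DivisionRing K] [AddCommGroup V]
    [Module K V] [AddCommGroup W] [Module K W] (T : V →ₗ[K] W) :
    ∃ S : W →ₗ[K] V, RightInvOn S T (Set.range T) := by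
  obtain ⟨S₀, hS₀⟩ := T.rangeRestrict.exists_rightInverse_of_surjective T.range_rangeRestrict
  obtain ⟨S, hS⟩ := LinearMap.exists_extend S₀
  refine ⟨S, ?_⟩
  rintro _ ⟨x, rfl⟩
  have hSx : S (T x) = S₀ ⟨T x, x, rfl⟩ := congr($hS ⟨T x, x, rfl⟩)
  rw [hSx]
  exact congr(($hS₀ ⟨T x, x, rfl⟩).1)

section MinNormSection

variable {E F : Type*} [NormedAddCommGroup E] [TopologicalSpace F] [T1Space F]

/-- The point of `Q ∩ T⁻¹{y}` of least norm (a junk value when there is none). -/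
noncomputable def minNormSection (Q : Set E) (T : E → F) (y : F) : E :=
  Classical.epsilon fun x => x ∈ Q ∩ T ⁻¹' {y} ∧ IsMinOn (‖·‖) (Q ∩ T ⁻¹' {y}) x

theorem minNormSection_spec {Q : Set E} {T : E → F} {y : F} (hQ : IsCompact Q)
    (hT : Continuous T) (hy : y ∈ T '' Q) :
    minNormSection Q T y ∈ Q ∩ T ⁻¹' {y} ∧
      IsMinOn (‖·‖) (Q ∩ T ⁻¹' {y}) (minNormSection Q T y) := by
  obtain ⟨x, hxQ, rfl⟩ := hy
  exact Classical.epsilon_spec <| (hQ.inter_right (isClosed_singleton.preimage hT)).exists_isMinOn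
    ⟨x, hxQ, rfl⟩ continuous_norm.continuousOn

end MinNormSection

section NormedSpace

variable {E F : Type*} [NormedAddCommGroup E] [NormedSpace ℝ E]
  [NormedAddCommGroup F] [NormedSpace ℝ F]

theorem norm_midpoint_le (a b : E) : ‖midpoint ℝ a b‖ ≤ (‖a‖ + ‖b‖) / 2 := by
  simpa [Real.norm_two] using dist_midpoint_midpoint_le (V := E) a b 0 0

theorem Convex.eq_of_isMinOn_norm [StrictConvexSpace ℝ E] {K : Set E} (hK : Convex ℝ K)
    {a b : E} (ha : a ∈ K) (hb : b ∈ K) (hmin : IsMinOn (‖·‖) K a) (hba : ‖b‖ ≤ ‖a‖) :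
    b = a := by
  by_contra hne
  have hmid : midpoint ℝ a b ∈ K := hK.segment_subset ha hb (midpoint_mem_segment a b)
  rw [midpoint_eq_smul_add, invOf_eq_inv, ← one_div] at hmid
  exact ((norm_midpoint_lt_iff (le_antisymm (hmin hb) hba)).2 (Ne.symm hne)).not_ge (hmin hmid)

theorem LinearMap.exists_continuous_rightInvOn_range_apply_eq [FiniteDimensional ℝ F]
    (T : E →ₗ[ℝ] F) (w : E) :
    ∃ c : F → E, Continuous c ∧ c (T w) = w ∧ RightInvOn c T (Set.range T) := by
  obtain ⟨S, hS⟩ := T.exists_rightInvOn_range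
  refine ⟨fun y => w + S (y - T w), by fun_prop, by simp, ?_⟩
  rintro _ ⟨x, rfl⟩
  rw [map_add, ← map_sub, hS (Set.mem_range_self (x - w)), map_sub, add_sub_cancel]

variable [FiniteDimensional ℝ E] {Q : Set E} {y : F}

theorem eq_minNormSection [StrictConvexSpace ℝ E] (hQ : IsCompact Q) (hconv : Convex ℝ Q)
    (T : E →ₗ[ℝ] F) (hy : y ∈ T '' Q) {z : E} (hz : z ∈ Q ∩ T ⁻¹' {y})
    (hle : ‖z‖ ≤ ‖minNormSection Q T y‖) : z = minNormSection Q T y :=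
  have hspec := minNormSection_spec hQ T.continuous_of_finiteDimensional hy
  (hconv.inter ((convex_singleton y).linear_preimage T)).eq_of_isMinOn_norm hspec.1 hz hspec.2 hle

theorem MapClusterPt.norm_le_of_minNormSection [FiniteDimensional ℝ F] (hQ : IsCompact Q)
    (T : E →ₗ[ℝ] F) {z : E} (hz : MapClusterPt z (𝓝[T '' Q] y) (minNormSection Q T)) :
    T z = y ∧ ∀ w ∈ interior Q, T w = y → ‖z‖ ≤ ‖w‖ := by
  obtain ⟨U, hU, hgU⟩ := mapClusterPt_iff_ultrafilter.1 hz
  have hTc : Continuous T := T.continuous_of_finiteDimensional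
  have hUy : Tendsto id (U : Filter F) (𝓝 y) := hU.trans nhdsWithin_le_nhds
  have hspec : ∀ᶠ y' in U, minNormSection Q T y' ∈ Q ∩ T ⁻¹' {y'} ∧
      IsMinOn (‖·‖) (Q ∩ T ⁻¹' {y'}) (minNormSection Q T y') :=
    hU (eventually_mem_nhdsWithin.mono fun y' hy' => minNormSection_spec hQ hTc hy')
  refine ⟨tendsto_nhds_unique ((hTc.tendsto z).comp hgU)
    (hUy.congr' (hspec.mono fun y' h => h.1.2.symm)), fun w hw hTw => ?_⟩
  obtain ⟨c, hc, hcw, hcT⟩ := T.exists_continuous_rightInvOn_range_apply_eq w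
  have hcU : Tendsto c U (𝓝 w) := by
    rw [← hcw, hTw]
    exact (hc.tendsto y).comp hUy
  refine le_of_tendsto_of_tendsto hgU.norm hcU.norm ?_
  filter_upwards [hspec, hcU (isOpen_interior.mem_nhds hw), hU self_mem_nhdsWithin]
    with y' hs hcy' hy'
  exact hs.2 ⟨interior_subset hcy', hcT (image_subset_range _ _ hy')⟩

theorem continuousOn_minNormSection [StrictConvexSpace ℝ E] [FiniteDimensional ℝ F]
    (hQ : IsCompact Q) (hconv : Convex ℝ Q)
    (hsc : ∀ x ∈ Q, ∀ y ∈ Q, x ≠ y → midpoint ℝ x y ∈ interior Q) (T : E →ₗ[ℝ] F) :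
    ContinuousOn (minNormSection Q T) (T '' Q) := by
  intro y hy
  have hTc : Continuous T := T.continuous_of_finiteDimensional
  refine hQ.tendsto_nhds_of_unique_mapClusterPt (eventually_mem_nhdsWithin.mono
    fun y' hy' => (minNormSection_spec hQ hTc hy').1.1) fun z hzQ hz => ?_
  obtain ⟨hTz, hz_le⟩ := hz.norm_le_of_minNormSection hQ T
  set x := minNormSection Q T y
  obtain ⟨⟨hxQ, hTx⟩, -⟩ := minNormSection_spec hQ hTc hy
  by_contra hne
  have hTmid : T (midpoint ℝ x z) = y := by
    rw [← T.coe_toAffineMap, T.toAffineMap.map_midpoint, T.coe_toAffineMap, hTx, hTz,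
      midpoint_self]
  have := hz_le _ (hsc x hxQ z hzQ (Ne.symm hne)) hTmid
  have := norm_midpoint_le x z
  exact hne (eq_minNormSection hQ hconv T hy ⟨hzQ, hTz⟩ (by linarith))

end NormedSpace

theorem strictlyConvex_min_euclidean_norm_section_general {n m : ℕ}
    (Q : Set (EuclideanSpace ℝ (Fin n)))
    (hcomp : IsCompact Q) (hconv : Convex ℝ Q)
    (hsc : ∀ x ∈ Q, ∀ y ∈ Q, x ≠ y → midpoint ℝ x y ∈ interior Q)
    (T : EuclideanSpace ℝ (Fin n) →ₗ[ℝ] EuclideanSpace ℝ (Fin m)) :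
    ∃ g : EuclideanSpace ℝ (Fin m) → EuclideanSpace ℝ (Fin n),
      ContinuousOn g (⇑T '' Q) ∧
      ∀ y ∈ ⇑T '' Q, g y ∈ Q ∧ T (g y) = y ∧
        (∀ z ∈ Q, T z = y → ‖g y‖ ≤ ‖z‖) ∧
        (∀ z ∈ Q, T z = y → ‖z‖ ≤ ‖g y‖ → z = g y) := by
  refine ⟨minNormSection Q T, continuousOn_minNormSection hcomp hconv hsc T, fun y hy => ?_⟩
  obtain ⟨⟨hgQ, hgT⟩, hgmin⟩ := minNormSection_spec hcomp T.continuous_of_finiteDimensional hy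
  exact ⟨hgQ, hgT, fun z hz hTz => hgmin ⟨hz, hTz⟩,
    fun z hz hTz => eq_minNormSection hcomp hconv T hy ⟨hz, hTz⟩⟩

/-- Let `Q ⊆ ℝⁿ` be a compact strictly convex set (convex, nonempty interior, and the midpoint
of any two distinct points of `Q` lies in its interior) and `T : ℝⁿ → ℝᵐ` linear. The map `g`
sending `y ∈ T(Q)` to the unique element of `T⁻¹(y) ∩ Q` of minimal Euclidean norm is a
well-defined continuous section of `T|_Q`. -/
theorem strictlyConvex_min_euclidean_norm_section {n m : ℕ}
    (Q : Set (EuclideanSpace ℝ (Fin n)))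
    (hcomp : IsCompact Q) (hconv : Convex ℝ Q)
    (hint : (interior Q).Nonempty)
    (hsc : ∀ x ∈ Q, ∀ y ∈ Q, x ≠ y → midpoint ℝ x y ∈ interior Q)
    (T : EuclideanSpace ℝ (Fin n) →ₗ[ℝ] EuclideanSpace ℝ (Fin m)) :
    ∃ g : EuclideanSpace ℝ (Fin m) → EuclideanSpace ℝ (Fin n),
      ContinuousOn g (⇑T '' Q) ∧
      ∀ y ∈ ⇑T '' Q, g y ∈ Q ∧ T (g y) = y ∧
        (∀ z ∈ Q, T z = y → ‖g y‖ ≤ ‖z‖) ∧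
        (∀ z ∈ Q, T z = y → ‖z‖ ≤ ‖g y‖ → z = g y) :=
  strictlyConvex_min_euclidean_norm_section_general Q hcomp hconv hsc T
end

section
/- Any linear image of a compact LNC subset of ℝⁿ is a compact LNC set: if Q ⊆ ℝⁿ is compact, convex, and LNC and T : ℝⁿ → ℝᵐ is linear, then T(Q) is compact, convex, and LNC. -/
open Set Filter Topology

/-- If `Q ⊆ ℝⁿ` is compact, convex and LNC and `T : ℝⁿ → ℝᵐ` is linear, then `T(Q)` is
compact, convex and LNC. -/
theorem lnc_image {n m : ℕ}
    (Q : Set (EuclideanSpace ℝ (Fin n)))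
    (hcomp : IsCompact Q) (hconv : Convex ℝ Q) (hlnc : LNC Q)
    (T : EuclideanSpace ℝ (Fin n) →ₗ[ℝ] EuclideanSpace ℝ (Fin m)) :
    IsCompact (⇑T '' Q) ∧ Convex ℝ (⇑T '' Q) ∧ LNC (⇑T '' Q) := by
  have hT : Continuous T := T.continuous_of_finiteDimensional
  refine ⟨hcomp.image hT, hconv.linear_image T, ?_⟩
  rintro y ⟨x₀, hx₀, rfl⟩ y' ⟨x', hx', rfl⟩
  -- the fiber of `T x₀` inside `Q`
  set F : Set (EuclideanSpace ℝ (Fin n)) := Q ∩ T ⁻¹' {T x₀} with hF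
  have hFx : ∀ x ∈ F, ∃ U O, U ⊆ Q ∧ IsOpen O ∧ x ∈ O ∧ O ∩ Q ⊆ U ∧
      ∀ u ∈ U, u + (2⁻¹ : ℝ) • (x' - x) ∈ Q := by
    intro x hx
    obtain ⟨U, hUQ, hUn, hUadd⟩ := hlnc x hx.1 x' hx'
    rw [mem_nhdsWithin] at hUn
    obtain ⟨O, hO, hxO, hOQ⟩ := hUn
    exact ⟨U, O, hUQ, hO, hxO, hOQ, hUadd⟩
  choose U O hUQ hO hxO hOQ hUadd using hFx
  -- open set covering the fiber
  set Oall : Set (EuclideanSpace ℝ (Fin n)) := ⋃ x : F, O x x.2 with hOall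
  have hOallOpen : IsOpen Oall := isOpen_iUnion fun x => hO x x.2
  have hFsub : F ⊆ Oall := fun x hx => mem_iUnion.2 ⟨⟨x, hx⟩, hxO x hx⟩
  -- the compact complement
  have hKcomp : IsCompact (Q \ Oall) := hcomp.diff hOallOpen
  have hKclosed : IsClosed (T '' (Q \ Oall)) := (hKcomp.image hT).isClosed
  refine ⟨(T '' Q) ∩ (T '' (Q \ Oall))ᶜ, inter_subset_left, ?_, ?_⟩
  · rw [mem_nhdsWithin]
    refine ⟨(T '' (Q \ Oall))ᶜ, hKclosed.isOpen_compl, ?_, ?_⟩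
    · rintro ⟨q, ⟨hqQ, hqO⟩, hq⟩
      exact hqO (hFsub ⟨hqQ, by simpa using hq⟩)
    · intro z hz
      exact ⟨hz.2, hz.1⟩
  · rintro z ⟨⟨q, hqQ, rfl⟩, hz⟩
    have hqO : q ∈ Oall := by
      by_contra h
      exact hz ⟨q, ⟨hqQ, h⟩, rfl⟩
    obtain ⟨⟨x, hxF⟩, hqx⟩ := mem_iUnion.1 hqO
    have hqU : q ∈ U x hxF := hOQ x hxF ⟨hqx, hqQ⟩
    have hQmem := hUadd x hxF q hqU
    refine ⟨q + (2⁻¹ : ℝ) • (x' - x), hQmem, ?_⟩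
    have hTx : T x = T x₀ := by simpa using hxF.2
    simp [map_add, map_smul, map_sub, hTx]
end

section
/- Let Q₀ be a compact convex subset of ℝⁿ and let Q = {(t·x, t) : x ∈ Q₀, 0 ≤ t ≤ 1} ⊆ ℝⁿ⁺¹ be the suspension (cone) over Q₀. If Q₀ has infinitely many extreme points, then Q is not LNC. -/
open Set Filter Topology

/-! By compactness the extreme points of `Q₀` accumulate at some `e ∈ Q₀`. Apply LNC to the
point `(e, 1)` and the apex `0` of the cone: for extreme points `e' ≠ e` close enough to `e`, the
point `(e', 1) - (e, 1) / 2 = (e' - e / 2, 1 / 2)` would lie in the cone, i.e. `2 e' - e ∈ Q₀`.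
But then `e'` is the midpoint of `e` and `2 e' - e`, contradicting its extremality. -/

theorem eq_zero_of_mem_extremePoints_of_sub_mem_of_add_mem {𝕜 E : Type*} [Ring 𝕜] [LinearOrder 𝕜]
    [IsStrictOrderedRing 𝕜] [Invertible (2 : 𝕜)] [AddCommGroup E] [Module 𝕜 E] {A : Set E}
    {x v : E} (hx : x ∈ A.extremePoints 𝕜) (hsub : x - v ∈ A) (hadd : x + v ∈ A) : v = 0 := by
  simpa using hx.2 hsub hadd (mem_openSegment_sub_add x v)

section Suspension

variable {E : Type*} [AddCommGroup E] [Module ℝ E]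

def suspension (Q₀ : Set E) : Set (E × ℝ) :=
  {p | ∃ x ∈ Q₀, ∃ t ∈ Icc (0 : ℝ) 1, p = (t • x, t)}

variable {Q₀ : Set E}

theorem mk_one_mem_suspension {x : E} (hx : x ∈ Q₀) : (x, 1) ∈ suspension Q₀ :=
  ⟨x, hx, 1, right_mem_Icc.2 zero_le_one, by simp⟩

theorem zero_mem_suspension (hQ₀ : Q₀.Nonempty) : (0 : E × ℝ) ∈ suspension Q₀ := by
  obtain ⟨z, hz⟩ := hQ₀
  exact ⟨z, hz, 0, left_mem_Icc.2 zero_le_one, by simp [Prod.ext_iff]⟩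

theorem inv_smul_mem_of_mk_mem_suspension {v : E} {t : ℝ} (h : (v, t) ∈ suspension Q₀)
    (ht : t ≠ 0) : t⁻¹ • v ∈ Q₀ := by
  obtain ⟨x, hx, s, -, hvt⟩ := h
  obtain ⟨rfl, rfl⟩ := Prod.mk.inj hvt
  rwa [inv_smul_smul₀ ht]

variable [TopologicalSpace E]

theorem not_lnc_suspension_of_accPt_extremePoints {e : E} (he : e ∈ Q₀)
    (hacc : AccPt e (𝓟 (Q₀.extremePoints ℝ))) : ¬ LNC (suspension Q₀) := by
  intro hLNC
  obtain ⟨U, -, hU, hshift⟩ :=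
    hLNC _ (mk_one_mem_suspension he) _ (zero_mem_suspension ⟨e, he⟩)
  have hUbase : {x | (x, (1 : ℝ)) ∈ U} ∈ 𝓝[Q₀] e :=
    (continuous_id.prodMk continuous_const).continuousWithinAt.tendsto_nhdsWithin
      (fun _ hx ↦ mk_one_mem_suspension hx) hU
  obtain ⟨V, hV, hVU⟩ := mem_nhdsWithin_iff_exists_mem_nhds_inter.1 hUbase
  obtain ⟨e', ⟨he'V, he'⟩, hne⟩ := accPt_iff_nhds.1 hacc V hV
  have hhalf : (e' - (2⁻¹ : ℝ) • e, (2⁻¹ : ℝ)) ∈ suspension Q₀ := by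
    convert hshift _ (hVU ⟨he'V, extremePoints_subset he'⟩) using 1
    ext <;> norm_num [sub_eq_add_neg]
  have hreflect : e' + (e' - e) ∈ Q₀ := by
    convert inv_smul_mem_of_mk_mem_suspension hhalf (by norm_num) using 1
    module
  refine hne (sub_eq_zero.1 ?_)
  exact eq_zero_of_mem_extremePoints_of_sub_mem_of_add_mem he' (by simpa using he) hreflect

end Suspension

theorem suspension_not_lnc_general {n : ℕ}
    (Q₀ : Set (EuclideanSpace ℝ (Fin n)))
    (hcomp : IsCompact Q₀)
    (hext : (Q₀.extremePoints ℝ).Infinite) :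
    ¬ LNC {p : EuclideanSpace ℝ (Fin n) × ℝ |
        ∃ x ∈ Q₀, ∃ t ∈ Set.Icc (0 : ℝ) 1, p = (t • x, t)} := by
  obtain ⟨e, he, hacc⟩ := hext.exists_accPt_of_subset_isCompact hcomp extremePoints_subset
  exact not_lnc_suspension_of_accPt_extremePoints he hacc

/-- Let `Q₀ ⊆ ℝⁿ` be compact and convex and let
`Q = {(t • x, t) : x ∈ Q₀, 0 ≤ t ≤ 1} ⊆ ℝⁿ⁺¹` be the suspension (cone) over `Q₀`.
If `Q₀` has infinitely many extreme points, then `Q` is not LNC. -/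
theorem suspension_not_lnc {n : ℕ}
    (Q₀ : Set (EuclideanSpace ℝ (Fin n)))
    (hcomp : IsCompact Q₀) (hconv : Convex ℝ Q₀)
    (hext : (Q₀.extremePoints ℝ).Infinite) :
    ¬ LNC {p : EuclideanSpace ℝ (Fin n) × ℝ |
        ∃ x ∈ Q₀, ∃ t ∈ Set.Icc (0 : ℝ) 1, p = (t • x, t)} :=
  suspension_not_lnc_general Q₀ hcomp hext
end

section
/- The cone in ℝ³ given as the convex hull of {(1-cos t, sin t, 1) : 0 ≤ t ≤ 2π} ∪ {(0,0,0)} is not LNC: the points z = (0,0,1), z' = (0,0,0), and z_n = (1-cos(1/n), sin(1/n), 1) satisfy z_n → z, z_n ∈ Q, but z_n + (z'-z)/2 ∉ Q for all n. -/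
open Set Filter Topology Real

/-!
Writing a point as `(x, y, z)`, the cone `Q` lies in the convex set `‖(x - z, y)‖ ≤ z`: the circle
points satisfy it with equality and the origin trivially. The points `z_n + (z' - z)/2` have height
`1/2` but their distance from the axis is `√(5/4 - cos (1/n)) > 1/2`, so they lie outside `Q`,
although `z_n → z` inside `Q`.
-/

theorem not_lnc_of_tendsto {X ι : Type*} [AddCommGroup X] [Module ℝ X] [TopologicalSpace X]
    {Q : Set X} {x x' : X} (hx : x ∈ Q) (hx' : x' ∈ Q) {l : Filter ι} [l.NeBot] {z : ι → X}
    (hz : Tendsto z l (𝓝[Q] x)) (hout : ∀ᶠ i in l, z i + (2⁻¹ : ℝ) • (x' - x) ∉ Q) :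
    ¬ LNC Q := by
  intro hQ
  obtain ⟨U, -, hU, hshift⟩ := hQ x hx x' hx'
  obtain ⟨i, hiU, hi⟩ := ((hz.eventually_mem hU).and hout).exists
  exact hi (hshift _ hiU)

theorem convex_setOf_norm_le {E F : Type*} [AddCommGroup E] [Module ℝ E]
    [SeminormedAddCommGroup F] [NormedSpace ℝ F] (L : E →ₗ[ℝ] F) (h : E →ₗ[ℝ] ℝ) :
    Convex ℝ {p | ‖L p‖ ≤ h p} := by
  have hconv : ConvexOn ℝ univ (fun p => ‖L p‖ - h p) :=
    ((convexOn_norm convex_univ).comp_linearMap L).sub (h.concaveOn convex_univ)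
  simpa only [sub_nonpos, mem_univ, true_and] using hconv.convex_le 0

/-- `‖coneAxisOffset (x, y, z)‖` is the distance from `(x, y, z)` to the point `(z, 0, z)` of the
cone's axis `ℝ • (1, 0, 1)` at the same height. -/
noncomputable def coneAxisOffset : (ℝ × ℝ × ℝ) →ₗ[ℝ] ℂ where
  toFun p := ⟨p.1 - p.2.2, p.2.1⟩
  map_add' p q := by
    apply Complex.ext
    · simp only [Prod.fst_add, Prod.snd_add, Complex.add_re]
      ring
    · simp only [Prod.snd_add, Prod.fst_add, Complex.add_im]
  map_smul' c p := by
    apply Complex.ext <;> simp only [Prod.smul_fst, Prod.smul_snd, smul_eq_mul, RingHom.id_apply,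
      Complex.real_smul, Complex.mul_re, Complex.mul_im, Complex.ofReal_re, Complex.ofReal_im] <;>
      ring

theorem norm_coneAxisOffset_sq (p : ℝ × ℝ × ℝ) :
    ‖coneAxisOffset p‖ ^ 2 = (p.1 - p.2.2) ^ 2 + p.2.1 ^ 2 := by
  rw [Complex.sq_norm, Complex.normSq_apply]
  simp only [coneAxisOffset, LinearMap.coe_mk, AddHom.coe_mk]
  ring

theorem norm_coneAxisOffset_circle (t : ℝ) :
    ‖coneAxisOffset (1 - cos t, sin t, 1)‖ = 1 := by
  have hsq : ‖coneAxisOffset (1 - cos t, sin t, 1)‖ ^ 2 = 1 ^ 2 := by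
    rw [norm_coneAxisOffset_sq]
    nlinarith [sin_sq_add_cos_sq t]
  exact (pow_left_inj₀ (norm_nonneg _) zero_le_one two_ne_zero).1 hsq

theorem half_lt_norm_coneAxisOffset {t : ℝ} (ht : cos t < 1) :
    2⁻¹ < ‖coneAxisOffset (1 - cos t, sin t, 2⁻¹)‖ := by
  have hsq : (2⁻¹ : ℝ) ^ 2 < ‖coneAxisOffset (1 - cos t, sin t, 2⁻¹)‖ ^ 2 := by
    rw [norm_coneAxisOffset_sq]
    nlinarith [sin_sq_add_cos_sq t]
  exact lt_of_pow_lt_pow_left₀ 2 (norm_nonneg _) hsq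

theorem convexHull_circle_union_origin_subset :
    convexHull ℝ ({p : ℝ × ℝ × ℝ | ∃ t ∈ Icc (0 : ℝ) (2 * π),
        p = (1 - cos t, sin t, 1)} ∪ {(0, 0, 0)}) ⊆
      {p | ‖coneAxisOffset p‖ ≤ p.2.2} := by
  refine convexHull_min ?_ (convex_setOf_norm_le coneAxisOffset
    (LinearMap.snd ℝ ℝ ℝ ∘ₗ LinearMap.snd ℝ ℝ (ℝ × ℝ)))
  rintro p (⟨t, -, rfl⟩ | rfl)
  · exact (norm_coneAxisOffset_circle t).le
  · simp [coneAxisOffset, Complex.ext_iff]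

theorem one_div_natCast_mem_Ioc_zero_pi {n : ℕ} (hn : 0 < n) : 1 / (n : ℝ) ∈ Ioc 0 π := by
  have hn : (1 : ℝ) ≤ n := by exact_mod_cast hn
  refine ⟨by positivity, ?_⟩
  calc 1 / (n : ℝ) ≤ 1 := div_le_one_of_le₀ hn (by positivity)
    _ ≤ π := by linarith [pi_gt_three]

theorem cos_one_div_natCast_lt_one {n : ℕ} (hn : 0 < n) : cos (1 / (n : ℝ)) < 1 := by
  obtain ⟨hpos, hle⟩ := one_div_natCast_mem_Ioc_zero_pi hn
  simpa using cos_lt_cos_of_nonneg_of_le_pi le_rfl hle hpos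

theorem tendsto_circle_one_div_natCast :
    Tendsto (fun n : ℕ => ((1 - cos (1 / (n : ℝ)), sin (1 / (n : ℝ)), (1 : ℝ)) : ℝ × ℝ × ℝ))
      atTop (𝓝 (0, 0, 1)) := by
  have hcircle : Continuous (fun t : ℝ => ((1 - cos t, sin t, (1 : ℝ)) : ℝ × ℝ × ℝ)) := by
    fun_prop
  simpa [Function.comp_def] using (hcircle.tendsto 0).comp tendsto_one_div_atTop_nhds_zero_nat

/-- The right circular cone in `ℝ³`, the convex hull of the circle
`{(1 - cos t, sin t, 1) : 0 ≤ t ≤ 2π}` together with the origin, is not LNC: the points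
`z = (0,0,1)`, `z' = (0,0,0)` and `z_n = (1 - cos(1/n), sin(1/n), 1)` lie in `Q`,
`z_n → z`, but `z_n + (z' - z)/2 ∉ Q` for all `n ≥ 1`. -/
theorem cone_not_lnc :
    let Q : Set (ℝ × ℝ × ℝ) := convexHull ℝ
      ({p : ℝ × ℝ × ℝ | ∃ t ∈ Set.Icc (0 : ℝ) (2 * π),
        p = (1 - Real.cos t, Real.sin t, 1)} ∪ {(0, 0, 0)})
    ((0 : ℝ), (0 : ℝ), (1 : ℝ)) ∈ Q ∧
    ((0 : ℝ), (0 : ℝ), (0 : ℝ)) ∈ Q ∧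
    (∀ n : ℕ, 0 < n →
      ((1 - Real.cos (1 / (n : ℝ)), Real.sin (1 / (n : ℝ)), (1 : ℝ)) : ℝ × ℝ × ℝ) ∈ Q) ∧
    Tendsto (fun n : ℕ =>
        ((1 - Real.cos (1 / (n : ℝ)), Real.sin (1 / (n : ℝ)), (1 : ℝ)) : ℝ × ℝ × ℝ))
      atTop (𝓝 ((0 : ℝ), (0 : ℝ), (1 : ℝ))) ∧
    (∀ n : ℕ, 0 < n →
      ((1 - Real.cos (1 / (n : ℝ)), Real.sin (1 / (n : ℝ)), (1 : ℝ)) : ℝ × ℝ × ℝ) +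
        (2⁻¹ : ℝ) • (((0 : ℝ), (0 : ℝ), (0 : ℝ)) - ((0 : ℝ), (0 : ℝ), (1 : ℝ))) ∉ Q) ∧
    ¬ LNC Q := by
  intro Q
  have hcircle : ∀ t ∈ Icc (0 : ℝ) (2 * π), ((1 - cos t, sin t, (1 : ℝ)) : ℝ × ℝ × ℝ) ∈ Q :=
    fun t ht => subset_convexHull ℝ _ (Or.inl ⟨t, ht, rfl⟩)
  have hz : ((0 : ℝ), (0 : ℝ), (1 : ℝ)) ∈ Q := by
    simpa using hcircle 0 ⟨le_rfl, by positivity⟩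
  have hz' : ((0 : ℝ), (0 : ℝ), (0 : ℝ)) ∈ Q := subset_convexHull ℝ _ (Or.inr rfl)
  have hzn : ∀ n : ℕ, 0 < n →
      ((1 - cos (1 / (n : ℝ)), sin (1 / (n : ℝ)), (1 : ℝ)) : ℝ × ℝ × ℝ) ∈ Q :=
    fun n hn => hcircle _ (Ioc_subset_Icc_self.trans (Icc_subset_Icc_right (by linarith [pi_pos]))
      (one_div_natCast_mem_Ioc_zero_pi hn))
  have hout : ∀ n : ℕ, 0 < n →
      ((1 - cos (1 / (n : ℝ)), sin (1 / (n : ℝ)), (1 : ℝ)) : ℝ × ℝ × ℝ) +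
        (2⁻¹ : ℝ) • (((0 : ℝ), (0 : ℝ), (0 : ℝ)) - ((0 : ℝ), (0 : ℝ), (1 : ℝ))) ∉ Q :=
    fun n hn hmem => (half_lt_norm_coneAxisOffset (cos_one_div_natCast_lt_one hn)).not_ge
      (convexHull_circle_union_origin_subset (by convert hmem using 1; ext <;> norm_num))
  refine ⟨hz, hz', hzn, tendsto_circle_one_div_natCast, hout, not_lnc_of_tendsto hz hz'
    (tendsto_nhdsWithin_iff.2 ⟨tendsto_circle_one_div_natCast, eventually_atTop.2 ⟨1, hzn⟩⟩)
    (eventually_atTop.2 ⟨1, hout⟩)⟩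
end

section
/- The set of positive semidefinite 2×2 real (or complex) matrices of operator norm at most 1 is not LNC: with x' = 0, x the rank-one projection diag(1,0), and x_t the rank-one projection with entries [[t, √(t-t²)],[√(t-t²), 1-t]] for t ∈ (0,1), we have x_t → x as t → 1 but x_t + (x'-x)/2 is never positive semidefinite. -/
/-!
In the Loewner order the set is the interval `[0, 1]`, and every orthogonal projection lies in it.
The rank-one projections `x_t` converge to `x = diag(1, 0)` inside the set, but
`det (x_t - x / 2) = -(1 - t) / 2 < 0`, so the midpoint-shifted matrices `x_t + (0 - x) / 2` leave
the set however close `x_t` is to `x`.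
-/

open Set Filter Topology

theorem not_LNC_of_tendsto {X ι : Type*} [AddCommGroup X] [Module ℝ X] [TopologicalSpace X]
    {Q : Set X} {x x' : X} (hx : x ∈ Q) (hx' : x' ∈ Q) {l : Filter ι} [l.NeBot] {f : ι → X}
    (hf : Tendsto f l (𝓝[Q] x)) (hshift : ∀ᶠ i in l, f i + (2⁻¹ : ℝ) • (x' - x) ∉ Q) :
    ¬ LNC Q := by
  intro hQ
  obtain ⟨U, -, hU, hUshift⟩ := hQ x hx x' hx'
  have hfU : ∀ᶠ i in l, f i ∈ U := hf hU
  obtain ⟨i, hiU, hi⟩ := (hfU.and hshift).exists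
  exact hi (hUshift _ hiU)

namespace Matrix

open scoped MatrixOrder ComplexOrder

theorem posSemidef_and_one_sub_of_isStarProjection {𝕜 n : Type*} [RCLike 𝕜] [Fintype n]
    [DecidableEq n] {P : Matrix n n 𝕜} (hP : IsStarProjection P) :
    P.PosSemidef ∧ (1 - P).PosSemidef :=
  ⟨nonneg_iff_posSemidef.1 hP.nonneg, nonneg_iff_posSemidef.1 hP.one_sub.nonneg⟩

theorem isStarProjection_fin_two {R : Type*} [CommRing R] [StarRing R] [TrivialStar R]
    {a b : R} (h : b ^ 2 = a - a ^ 2) : IsStarProjection !![a, b; b, 1 - a] := by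
  constructor
  · rw [IsIdempotentElem, mul_fin_two]
    ext i j
    fin_cases i <;> fin_cases j <;>
      simp only [Fin.zero_eta, Fin.mk_one, Fin.isValue, of_apply, cons_val', cons_val_zero,
        cons_val_one, cons_val_fin_one]
    · linear_combination h
    · ring
    · ring
    · linear_combination h
  · ext i j
    fin_cases i <;> fin_cases j <;> simp [star_apply]

theorem not_posSemidef_fin_two_sub_half {a b : ℝ} (h : b ^ 2 = a - a ^ 2) (ha : a < 1) :
    ¬ (!![a, b; b, 1 - a] - (2⁻¹ : ℝ) • !![1, 0; 0, 0]).PosSemidef := by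
  intro hpsd
  have hdet := hpsd.det_nonneg
  rw [det_fin_two] at hdet
  simp only [smul_of, smul_cons, smul_eq_mul, mul_one, mul_zero, smul_empty, Fin.isValue, sub_apply,
    of_apply, cons_val', cons_val_zero, cons_val_fin_one, cons_val_one, sub_zero, sub_nonneg] at hdet
  linarith

end Matrix

/-- The positive part of the unit ball of the 2×2 real matrix algebra, i.e. the set of
positive semidefinite matrices `A` with `A ≤ 1` (operator norm at most 1), is not LNC:
with `x' = 0`, `x = diag(1,0)` and `x_t = [[t, √(t-t²)],[√(t-t²), 1-t]]` for `t ∈ (0,1)`,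
all these matrices lie in the set, `x_t → x` as `t → 1⁻`, but `x_t + (x' - x)/2` is never
positive semidefinite. -/
theorem posPartUnitBall_matrix_not_lnc :
    let S : Set (Matrix (Fin 2) (Fin 2) ℝ) :=
      {A | A.PosSemidef ∧ (1 - A).PosSemidef}
    let x : Matrix (Fin 2) (Fin 2) ℝ := !![1, 0; 0, 0]
    let xt : ℝ → Matrix (Fin 2) (Fin 2) ℝ := fun t =>
      !![t, Real.sqrt (t - t ^ 2); Real.sqrt (t - t ^ 2), 1 - t]
    x ∈ S ∧ (0 : Matrix (Fin 2) (Fin 2) ℝ) ∈ S ∧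
    (∀ t ∈ Set.Ioo (0 : ℝ) 1, xt t ∈ S) ∧
    Tendsto xt (nhdsWithin 1 (Set.Ioo (0 : ℝ) 1)) (𝓝 x) ∧
    (∀ t ∈ Set.Ioo (0 : ℝ) 1,
      ¬ (xt t + (2⁻¹ : ℝ) • ((0 : Matrix (Fin 2) (Fin 2) ℝ) - x)).PosSemidef) ∧
    ¬ LNC S := by
  intro S x xt
  have hsqrt : ∀ t ∈ Ioo (0 : ℝ) 1, Real.sqrt (t - t ^ 2) ^ 2 = t - t ^ 2 := fun t ht =>
    Real.sq_sqrt (by nlinarith [ht.1, ht.2])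
  have hx : x ∈ S := Matrix.posSemidef_and_one_sub_of_isStarProjection <| by
    simpa using Matrix.isStarProjection_fin_two (a := (1 : ℝ)) (b := 0) (by norm_num)
  have h0 : (0 : Matrix (Fin 2) (Fin 2) ℝ) ∈ S :=
    Matrix.posSemidef_and_one_sub_of_isStarProjection (.zero _)
  have hxt : ∀ t ∈ Ioo (0 : ℝ) 1, xt t ∈ S := fun t ht =>
    Matrix.posSemidef_and_one_sub_of_isStarProjection (Matrix.isStarProjection_fin_two (hsqrt t ht))
  have hlim : Tendsto xt (𝓝[Ioo 0 1] 1) (𝓝 x) := by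
    have hcont : Continuous xt := by fun_prop
    simpa [xt, x] using (hcont.tendsto 1).mono_left nhdsWithin_le_nhds
  have hshift : ∀ t ∈ Ioo (0 : ℝ) 1,
      ¬ (xt t + (2⁻¹ : ℝ) • ((0 : Matrix (Fin 2) (Fin 2) ℝ) - x)).PosSemidef := fun t ht => by
    simpa [xt, x, ← sub_eq_add_neg] using Matrix.not_posSemidef_fin_two_sub_half (hsqrt t ht) ht.2
  have : (𝓝[Ioo (0 : ℝ) 1] 1).NeBot := right_nhdsWithin_Ioo_neBot zero_lt_one
  refine ⟨hx, h0, hxt, hlim, hshift, not_LNC_of_tendsto hx h0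
    (tendsto_nhdsWithin_iff.2 ⟨hlim, eventually_nhdsWithin_of_forall hxt⟩)
    (eventually_nhdsWithin_of_forall fun t ht hS => hshift t ht hS.1)⟩
end

section
/- The positive part of the unit ball of any infinite-dimensional L^p space, 1 ≤ p < ∞, is not LNC (with respect to the norm topology): there exist x, x' in the set and a sequence x_k → x in the set with x_k + (x'-x)/2 never in the set. -/
open Set Filter Topology MeasureTheory

/-!
Take `g ≥ 0` in the unit ball of `L^p`, strictly positive on every `A n`; it exists because `μ` is
σ-finite on `⋃ n, A n`. Let `g_k` be `g` with its part on `A k` cut off. As the `A k` are disjoint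
and `∫ |g|^p < ∞`, `‖g - g_k‖_p^p = ∫_{A k} |g|^p → 0`, so `g_k → g` inside the set; yet
`g_k + (0 - g)/2 = -g/2 < 0` on `A k`, a set of positive measure.
-/

open scoped ENNReal NNReal

theorem not_lnc_of_tendsto_s18 {X : Type*} [AddCommGroup X] [Module ℝ X] [TopologicalSpace X]
    {Q : Set X} {x x' : X} (hx : x ∈ Q) (hx' : x' ∈ Q) {u : ℕ → X} (hu : ∀ k, u k ∈ Q)
    (hlim : Tendsto u atTop (𝓝 x)) (hbad : ∀ k, u k + (2⁻¹ : ℝ) • (x' - x) ∉ Q) :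
    ¬ LNC Q := by
  intro hQ
  obtain ⟨U, -, hU, hUQ⟩ := hQ x hx x' hx'
  obtain ⟨k, hk⟩ := (tendsto_nhdsWithin_of_tendsto_nhds_of_eventually_within _ hlim
    (.of_forall hu)).eventually_mem hU |>.exists
  exact hbad k (hUQ _ hk)

def posUnitBall (E : Type*) [Norm E] [LE E] [Zero E] : Set E := {f | 0 ≤ f ∧ ‖f‖ ≤ 1}

namespace MeasureTheory

variable {Ω : Type*} [MeasurableSpace Ω] {μ : Measure Ω} {p : ℝ≥0∞}

theorem sigmaFinite_restrict_iUnion {A : ℕ → Set Ω} (hA : MeasurableSet (⋃ n, A n))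
    (hfin : ∀ n, μ (A n) < ∞) : SigmaFinite (μ.restrict (⋃ n, A n)) := by
  refine Measure.sigmaFinite_of_countable (S := insert (⋃ n, A n)ᶜ (range A))
    ((countable_range A).insert _) ?_
    (by rw [sUnion_insert, sUnion_range, compl_union_self])
  rintro _ (rfl | ⟨n, rfl⟩)
  · rw [Measure.restrict_apply' hA, compl_inter_self, measure_empty]
    exact ENNReal.zero_lt_top
  · exact (Measure.restrict_apply_le _ _).trans_lt (hfin n)

theorem exists_memLp_nonneg_pos_on (hp0 : p ≠ 0) (hp : p ≠ ∞) {s : Set Ω}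
    (hs : MeasurableSet s) [SigmaFinite (μ.restrict s)] :
    ∃ g : Ω → ℝ, MemLp g p μ ∧ eLpNorm g p μ ≤ 1 ∧ 0 ≤ g ∧ ∀ ω ∈ s, 0 < g ω := by
  obtain ⟨h, hpos, hmeas, hint⟩ :=
    exists_pos_lintegral_lt_of_sigmaFinite (μ.restrict s) one_ne_zero
  set g : Ω → ℝ := s.indicator fun ω => (h ω ^ p.toReal⁻¹ : ℝ≥0)
  have hpt : 0 < p.toReal := ENNReal.toReal_pos hp0 hp
  have hnorm : eLpNorm g p μ ≤ 1 := by
    have hpow : ∀ ω, ‖((h ω ^ p.toReal⁻¹ : ℝ≥0) : ℝ)‖ₑ ^ p.toReal = h ω := fun ω => by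
      rw [Real.enorm_eq_ofReal (NNReal.coe_nonneg _), ENNReal.ofReal_coe_nnreal,
        ← ENNReal.coe_rpow_of_nonneg _ hpt.le, NNReal.rpow_inv_rpow hpt.ne']
    rw [eLpNorm_indicator_eq_eLpNorm_restrict hs, eLpNorm_eq_lintegral_rpow_enorm_toReal hp0 hp]
    simp_rw [hpow]
    exact ENNReal.rpow_le_one hint.le (by positivity)
  have hg_meas : Measurable g :=
    ((hmeas.pow_const _).coe_nnreal_real).indicator hs
  refine ⟨g, ⟨hg_meas.aestronglyMeasurable, hnorm.trans_lt ENNReal.one_lt_top⟩, hnorm,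
    fun ω => indicator_nonneg (fun _ _ => NNReal.coe_nonneg _) ω, fun ω hω => ?_⟩
  simpa [g, indicator_of_mem hω] using Real.rpow_pos_of_pos (hpos ω) _

theorem tendsto_eLpNorm_indicator_of_pairwise_disjoint {E : Type*} [NormedAddCommGroup E]
    (hp : p ≠ ∞) {f : Ω → E} (hf : MemLp f p μ) {A : ℕ → Set Ω}
    (hA : ∀ n, MeasurableSet (A n)) (hdisj : Pairwise (Function.onFun Disjoint A)) :
    Tendsto (fun n => eLpNorm ((A n).indicator f) p μ) atTop (𝓝 0) := by
  rcases eq_or_ne p 0 with rfl | hp0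
  · simp
  have hpt : 0 < p.toReal := ENNReal.toReal_pos hp0 hp
  have hsum : ∑' n, ∫⁻ ω in A n, ‖f ω‖ₑ ^ p.toReal ∂μ ≠ ∞ := by
    rw [← lintegral_iUnion hA hdisj]
    exact (setLIntegral_le_lintegral _ _).trans_lt
      (lintegral_rpow_enorm_lt_top_of_eLpNorm_lt_top hp0 hp hf.2) |>.ne
  have h := ((ENNReal.continuous_rpow_const (y := p.toReal⁻¹)).tendsto 0).comp
    (ENNReal.tendsto_atTop_zero_of_tsum_ne_top hsum)
  rw [ENNReal.zero_rpow_of_pos (inv_pos.2 hpt)] at h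
  refine h.congr fun n => ?_
  rw [Function.comp_apply, eLpNorm_indicator_eq_eLpNorm_restrict (hA n),
    eLpNorm_eq_lintegral_rpow_enorm_toReal hp0 hp, one_div]

theorem MemLp.toLp_mem_posUnitBall {g : Ω → ℝ} (hg : MemLp g p μ) (hg0 : 0 ≤ g)
    (hg1 : eLpNorm g p μ ≤ 1) : hg.toLp g ∈ posUnitBall (Lp ℝ p μ) := by
  refine ⟨(Lp.coeFn_nonneg _).1 ?_, ?_⟩
  · filter_upwards [hg.coeFn_toLp] with ω hω
    rw [hω]
    exact hg0 ω
  · rw [Lp.norm_toLp]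
    exact ENNReal.toReal_le_of_le_ofReal zero_le_one (ENNReal.ofReal_one ▸ hg1)

theorem MemLp.toLp_not_nonneg {f : Ω → ℝ} (hf : MemLp f p μ) {s : Set Ω} (hs : μ s ≠ 0)
    (hneg : ∀ ω ∈ s, f ω < 0) : ¬ 0 ≤ hf.toLp f := by
  intro h
  have hf0 : ∀ᵐ ω ∂μ, 0 ≤ f ω := by
    filter_upwards [(Lp.coeFn_nonneg _).2 h, hf.coeFn_toLp] with ω h₁ h₂
    rwa [← h₂]
  exact hs (measure_mono_null (fun ω hω => (hneg ω hω).not_ge) (ae_iff.1 hf0))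

theorem exists_seq_tendsto_add_half_sub_notMem_posUnitBall [Fact (1 ≤ p)] (hp : p ≠ ∞)
    {g : Ω → ℝ} (hg : MemLp g p μ) (hg0 : 0 ≤ g) (hg1 : eLpNorm g p μ ≤ 1) {A : ℕ → Set Ω}
    (hA : ∀ n, MeasurableSet (A n)) (hdisj : Pairwise (Function.onFun Disjoint A))
    (hμA : ∀ n, μ (A n) ≠ 0) (hgA : ∀ n, ∀ ω ∈ A n, 0 < g ω) :
    ∃ x ∈ posUnitBall (Lp ℝ p μ), ∃ x' ∈ posUnitBall (Lp ℝ p μ), ∃ xk : ℕ → Lp ℝ p μ,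
      (∀ k, xk k ∈ posUnitBall (Lp ℝ p μ)) ∧ Tendsto xk atTop (𝓝 x) ∧
      ∀ k, xk k + (2⁻¹ : ℝ) • (x' - x) ∉ posUnitBall (Lp ℝ p μ) := by
  have hgk (k : ℕ) : MemLp ((A k)ᶜ.indicator g) p μ := hg.indicator (hA k).compl
  refine ⟨hg.toLp g, hg.toLp_mem_posUnitBall hg0 hg1, 0, ⟨le_rfl, by simp⟩,
    fun k => (hgk k).toLp _, fun k => ?_, ?_, fun k hk => ?_⟩
  · exact (hgk k).toLp_mem_posUnitBall (indicator_nonneg fun ω _ => hg0 ω)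
      ((eLpNorm_indicator_le g).trans hg1)
  · rw [Lp.tendsto_Lp_iff_tendsto_eLpNorm'']
    refine (tendsto_eLpNorm_indicator_of_pairwise_disjoint hp hg hA hdisj).congr fun k => ?_
    rw [indicator_compl, sub_sub_cancel_left, eLpNorm_neg]
  · rw [zero_sub, ← MemLp.toLp_neg, ← MemLp.toLp_const_smul, ← MemLp.toLp_add] at hk
    refine MemLp.toLp_not_nonneg _ (hμA k) (fun ω hω => ?_) hk.1
    simp [hω, hgA k ω hω]

end MeasureTheory

/-- The positive part of the unit ball of an infinite-dimensional `L^p` space, `1 ≤ p < ∞`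
(infinite-dimensionality guaranteed by a sequence of pairwise disjoint sets of positive finite
measure), is not LNC: in fact there are `x, x'` in the set and a sequence `x_k → x` in the set
with `x_k + (x' - x)/2` never in the set. -/
theorem posPartUnitBall_Lp_not_lnc {Ω : Type*} [MeasurableSpace Ω] (μ : Measure Ω)
    (p : ENNReal) [Fact (1 ≤ p)] (hp : p ≠ ⊤)
    (A : ℕ → Set Ω) (hA : ∀ n, MeasurableSet (A n))
    (hdisj : Pairwise (Function.onFun Disjoint A))
    (hpos : ∀ n, 0 < μ (A n)) (hfin : ∀ n, μ (A n) < ⊤) :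
    let S : Set (Lp ℝ p μ) := {f | 0 ≤ f ∧ ‖f‖ ≤ 1}
    (¬ LNC S) ∧
    ∃ x ∈ S, ∃ x' ∈ S, ∃ xk : ℕ → Lp ℝ p μ,
      (∀ k, xk k ∈ S) ∧ Tendsto xk atTop (𝓝 x) ∧
      ∀ k, xk k + (2⁻¹ : ℝ) • (x' - x) ∉ S := by
  have hp0 : p ≠ 0 := (zero_lt_one.trans_le Fact.out).ne'
  have hU : MeasurableSet (⋃ n, A n) := .iUnion hA
  have := sigmaFinite_restrict_iUnion hU hfin
  obtain ⟨g, hg, hg1, hg0, hgU⟩ := exists_memLp_nonneg_pos_on (μ := μ) hp0 hp hU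
  obtain ⟨x, hx, x', hx', xk, hxk, hlim, hbad⟩ :=
    exists_seq_tendsto_add_half_sub_notMem_posUnitBall hp hg hg0 hg1 hA hdisj
      (fun n => (hpos n).ne') (fun n ω hω => hgU ω (mem_iUnion_of_mem n hω))
  exact ⟨not_lnc_of_tendsto_s18 hx hx' hxk hlim hbad, x, hx, x', hx', xk, hxk, hlim, hbad⟩
end
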